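/- For each fixed integer m ≥ 1, the limit μ_m = lim_{n→∞} G_{m×n}(1)^{1/(mn)} exists; moreover lim_{m→∞} μ_m = μ, where μ = lim_{m,n→∞} G_{m×n}(1)^{1/(mn)} is the growth constant of the grid. -/

import Mathlib

open scoped Classical

/-- `S` is a dominating set of `G`: every vertex is in `S` or adjacent to a vertex of `S`. -/
def IsDominating {V : Type*} (G : SimpleGraph V) (S : Finset V) : Prop :=
  ∀ v : V, v ∈ S ∨ ∃ u ∈ S, G.Adj u v

/-- The m×n grid graph `P_m □ P_n`. -/
def gridGraph (m n : ℕ) : SimpleGraph (Fin m × Fin n) :=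
  (SimpleGraph.pathGraph m).boxProd (SimpleGraph.pathGraph n)

/-- `G_{m×n}(1)`: the total number of dominating sets of the m×n grid graph. -/
noncomputable def numDomGrid (m n : ℕ) : ℕ :=
  (Finset.univ.filter
    (fun S : Finset (Fin m × Fin n) => IsDominating (gridGraph m n) S)).card

/-- `G_{m×n}(1)^{1/(mn)}`, as a real number. -/
noncomputable def gridGrowth (m n : ℕ) : ℝ :=
  (numDomGrid m n : ℝ) ^ ((1 : ℝ) / (m * n : ℕ))

/-! Placing a dominating set of the `m × p` grid next to one of the `m × q` grid gives a
dominating set of the `m × (p + q)` grid, and the pair can be read back off the union. Hence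
`n ↦ G_{m×n}(1)` is supermultiplicative, and it is at most `(2 ^ m) ^ n`, so Fekete's lemma gives
the row limits `μ_m`. Once the double limit `μ` exists, the iterated limit agrees with it: for
every closed neighbourhood `U` of `μ` and all large `m`, the values `G_{m×n}(1)^{1/(mn)}` lie in
`U` for all large `n`, hence so does their limit `μ_m`. -/

open Finset Filter Topology

theorem exists_tendsto_div_of_superadditive {a : ℕ → ℝ} (ha : ∀ p q, a p + a q ≤ a (p + q))
    (hbdd : BddAbove (Set.range fun n => a n / n)) :
    ∃ L, Tendsto (fun n => a n / n) atTop (𝓝 L) := by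
  have hsub : Subadditive (-a) := fun p q => by
    simp only [Pi.neg_apply]
    linarith [ha p q]
  have hbdd' : BddBelow (Set.range fun n => (-a) n / n) := by
    obtain ⟨M, hM⟩ := hbdd
    refine ⟨-M, Set.forall_mem_range.2 fun n => ?_⟩
    simpa [neg_div] using hM (Set.mem_range_self n)
  exact ⟨-hsub.lim, by simpa [neg_div] using (hsub.tendsto_lim hbdd').neg⟩

theorem exists_tendsto_rpow_inv_of_supermultiplicative {b : ℕ → ℝ} (hpos : ∀ n, 0 < b n)
    (hb : ∀ p q, b p * b q ≤ b (p + q)) (C : ℝ) (hC : ∀ n, b n ≤ C ^ n) :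
    ∃ L, Tendsto (fun n : ℕ => b n ^ (1 / n : ℝ)) atTop (𝓝 L) := by
  have hlog : ∀ p q, Real.log (b p) + Real.log (b q) ≤ Real.log (b (p + q)) := fun p q => by
    rw [← Real.log_mul (hpos p).ne' (hpos q).ne']
    exact Real.log_le_log (mul_pos (hpos p) (hpos q)) (hb p q)
  have hbdd : BddAbove (Set.range fun n : ℕ => Real.log (b n) / n) := by
    refine ⟨|Real.log C|, Set.forall_mem_range.2 fun n => ?_⟩
    rcases n.eq_zero_or_pos with rfl | hn
    · simp
    · rw [div_le_iff₀ (by exact_mod_cast hn)]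
      calc Real.log (b n) ≤ Real.log (C ^ n) := Real.log_le_log (hpos n) (hC n)
        _ = n * Real.log C := Real.log_pow C n
        _ ≤ |Real.log C| * n := by rw [mul_comm]; gcongr; exact le_abs_self _
  obtain ⟨L, hL⟩ := exists_tendsto_div_of_superadditive hlog hbdd
  refine ⟨Real.exp L, (Real.continuous_exp.tendsto L |>.comp hL).congr fun n => ?_⟩
  rw [Function.comp_apply, Real.rpow_def_of_pos (hpos n), div_eq_mul_one_div]

theorem Filter.Tendsto.tendsto_of_eventually_tendsto_curry {α β γ : Type*} [TopologicalSpace γ]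
    [RegularSpace γ] {la : Filter α} {lb : Filter β} [lb.NeBot] {f : α × β → γ} {g : α → γ}
    {c : γ} (hf : Tendsto f (la ×ˢ lb) (𝓝 c))
    (hg : ∀ᶠ a in la, Tendsto (fun b => f (a, b)) lb (𝓝 (g a))) :
    Tendsto g la (𝓝 c) := by
  refine (closed_nhds_basis c).tendsto_right_iff.2 fun s ⟨hs, hs_closed⟩ => ?_
  filter_upwards [(hf.eventually_mem hs).curry, hg] with a hfa hga
  exact hs_closed.mem_of_tendsto hga hfa

theorem Finset.image_union_image_injective {α β γ : Type*} [DecidableEq γ] {f₁ : α → γ}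
    {f₂ : β → γ} (h₁ : Function.Injective f₁) (h₂ : Function.Injective f₂)
    (hdisj : Disjoint (Set.range f₁) (Set.range f₂)) :
    Function.Injective fun A : Finset α × Finset β => A.1.image f₁ ∪ A.2.image f₂ := by
  have hne : ∀ a b, f₁ a ≠ f₂ b := Set.disjoint_range_iff.1 hdisj
  rintro ⟨A₁, A₂⟩ ⟨B₁, B₂⟩ h
  have hA₁ := fun x => congrArg (f₁ x ∈ ·) h
  have hA₂ := fun x => congrArg (f₂ x ∈ ·) h
  simp only [mem_union, mem_image, h₁.eq_iff, h₂.eq_iff, hne, (hne _ _).symm, and_false,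
    exists_false, or_false, false_or, exists_eq_right, eq_iff_iff] at hA₁ hA₂
  exact Prod.ext (Finset.ext hA₁) (Finset.ext hA₂)

theorem Fin.isCompl_range_castAdd_natAdd (p q : ℕ) :
    IsCompl (Set.range (Fin.castAdd q : Fin p → Fin (p + q))) (Set.range (Fin.natAdd p)) := by
  rw [← eq_compl_iff_isCompl, Fin.range_natAdd]
  ext i
  simp [Fin.castAdd, Fin.range_castLE]

namespace SimpleGraph

variable {V W W' : Type*} {H : SimpleGraph W} {H' : SimpleGraph W'}

def Embedding.boxProdMapRight (f : H ↪g H') (G : SimpleGraph V) :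
    G.boxProd H ↪g G.boxProd H' where
  toEmbedding := (Function.Embedding.refl V).prodMap f.toEmbedding
  map_rel_iff' := by simp [boxProd_adj, f.injective.eq_iff]

theorem Embedding.range_boxProdMapRight (f : H ↪g H') (G : SimpleGraph V) :
    Set.range (f.boxProdMapRight G) = Prod.snd ⁻¹' Set.range f := by
  ext ⟨a, b⟩
  simp [Embedding.boxProdMapRight]

def pathGraphCastAdd (p q : ℕ) : pathGraph p ↪g pathGraph (p + q) where
  toEmbedding := Fin.castAddEmb q
  map_rel_iff' := by simp [pathGraph_adj]

def pathGraphNatAdd (p q : ℕ) : pathGraph q ↪g pathGraph (p + q) where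
  toEmbedding := Fin.natAddEmb p
  map_rel_iff' := by simp [pathGraph_adj]; omega

end SimpleGraph

namespace IsDominating

variable {V W₁ W₂ : Type*} [DecidableEq V] {G : SimpleGraph V} {H₁ : SimpleGraph W₁}
  {H₂ : SimpleGraph W₂}

theorem image_union (f₁ : H₁ →g G) (f₂ : H₂ →g G)
    (hcover : Codisjoint (Set.range f₁) (Set.range f₂)) {S₁ : Finset W₁} {S₂ : Finset W₂}
    (h₁ : IsDominating H₁ S₁) (h₂ : IsDominating H₂ S₂) :
    IsDominating G (S₁.image f₁ ∪ S₂.image f₂) := by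
  intro v
  rcases hcover.eq_top.ge (Set.mem_univ v) with ⟨w, rfl⟩ | ⟨w, rfl⟩
  · rcases h₁ w with hw | ⟨u, hu, huw⟩
    · exact .inl (mem_union_left _ (mem_image_of_mem f₁ hw))
    · exact .inr ⟨f₁ u, mem_union_left _ (mem_image_of_mem f₁ hu), f₁.map_adj huw⟩
  · rcases h₂ w with hw | ⟨u, hu, huw⟩
    · exact .inl (mem_union_right _ (mem_image_of_mem f₂ hw))
    · exact .inr ⟨f₂ u, mem_union_right _ (mem_image_of_mem f₂ hu), f₂.map_adj huw⟩

end IsDominating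

theorem card_isDominating_mul_le {V W₁ W₂ : Type*} [Fintype V] [Fintype W₁] [Fintype W₂]
    {G : SimpleGraph V} {H₁ : SimpleGraph W₁} {H₂ : SimpleGraph W₂} (f₁ : H₁ ↪g G) (f₂ : H₂ ↪g G)
    (hcompl : IsCompl (Set.range f₁) (Set.range f₂)) :
    #{S : Finset W₁ | IsDominating H₁ S} * #{S : Finset W₂ | IsDominating H₂ S} ≤
      #{S : Finset V | IsDominating G S} := by
  rw [← card_product]
  refine card_le_card_of_injOn _ ?_
    (Finset.image_union_image_injective f₁.injective f₂.injective hcompl.disjoint).injOn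
  rintro ⟨S₁, S₂⟩ hS
  simp only [coe_product, Set.mem_prod, coe_filter, mem_univ, true_and] at hS ⊢
  exact hS.1.image_union f₁.toHom f₂.toHom hcompl.codisjoint hS.2

theorem one_le_numDomGrid (m n : ℕ) : 1 ≤ numDomGrid m n :=
  card_pos.2 ⟨univ, by simp [IsDominating]⟩

theorem numDomGrid_le_two_pow (m n : ℕ) : numDomGrid m n ≤ (2 ^ m) ^ n := by
  rw [← pow_mul]
  calc numDomGrid m n ≤ Fintype.card (Finset (Fin m × Fin n)) := card_le_univ _
    _ = 2 ^ (m * n) := by simp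

open SimpleGraph in
theorem numDomGrid_mul_le_add (m p q : ℕ) :
    numDomGrid m p * numDomGrid m q ≤ numDomGrid m (p + q) := by
  have hpath : IsCompl (Set.range (pathGraphCastAdd p q)) (Set.range (pathGraphNatAdd p q)) :=
    Fin.isCompl_range_castAdd_natAdd p q
  have hcompl := hpath.preimage (@Prod.snd (Fin m) _)
  rw [← Embedding.range_boxProdMapRight (pathGraphCastAdd p q) (pathGraph m),
    ← Embedding.range_boxProdMapRight (pathGraphNatAdd p q) (pathGraph m)] at hcompl
  exact card_isDominating_mul_le _ _ hcompl

theorem gridGrowth_eq_rpow_rpow (m n : ℕ) :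
    gridGrowth m n = ((numDomGrid m n : ℝ) ^ (1 / n : ℝ)) ^ (1 / m : ℝ) := by
  rw [gridGrowth, ← Real.rpow_mul (Nat.cast_nonneg _)]
  push_cast
  rw [one_div_mul_one_div, mul_comm]

theorem exists_tendsto_gridGrowth (m : ℕ) :
    ∃ L, Tendsto (fun n => gridGrowth m n) atTop (𝓝 L) := by
  obtain ⟨L, hL⟩ := exists_tendsto_rpow_inv_of_supermultiplicative
    (b := fun n => (numDomGrid m n : ℝ)) (fun n => by exact_mod_cast one_le_numDomGrid m n)
    (fun p q => by exact_mod_cast numDomGrid_mul_le_add m p q) (2 ^ m)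
    (fun n => by exact_mod_cast numDomGrid_le_two_pow m n)
  simp only [gridGrowth_eq_rpow_rpow]
  exact ⟨_, hL.rpow_const (.inr (by positivity))⟩

/-- For each fixed `m ≥ 1` the limit `μ_m = lim_{n→∞} G_{m×n}(1)^{1/(mn)}` exists, and if
`μ` is the growth constant of the grid (the limit of `G_{m×n}(1)^{1/(mn)}` as
`min(m,n) → ∞`), then `μ_m → μ` as `m → ∞`. -/
theorem gridGrowth_row_limits (μ : ℝ)
    (hμ : Filter.Tendsto (fun p : ℕ × ℕ => gridGrowth p.1 p.2)
      (Filter.atTop ×ˢ Filter.atTop) (nhds μ)) :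
    ∃ μm : ℕ → ℝ,
      (∀ m : ℕ, 1 ≤ m →
        Filter.Tendsto (fun n : ℕ => gridGrowth m n) Filter.atTop (nhds (μm m))) ∧
      Filter.Tendsto μm Filter.atTop (nhds μ) := by
  choose μm hμm using exists_tendsto_gridGrowth
  exact ⟨μm, fun m _ => hμm m, hμ.tendsto_of_eventually_tendsto_curry (.of_forall hμm)⟩
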